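/- Suppose G is a triangle-free graph on n vertices with no independent set of order k and with e edges, and suppose that every triangle-free graph on m vertices with no independent set of order k-1 has at least f(m) edges for each m. Then e ≥ max over vertices v of [f(n - deg(v) - 1) + deg(v) + Σ_{u ∈ N(v)}(deg(u) - 1)] is a valid lower bound; in particular, e ≥ f(n - d - 1) + d for a vertex v of degree d. -/

import Mathlib

/-!
Remove a vertex `v` together with its neighbourhood `N(v)`. What remains induces a triangle-free
graph on `n - deg v - 1` vertices, and it has no independent set of order `k - 1`, since adding
`v` to one would give an independent set of order `k` in `G`; so it has at least
`f (n - deg v - 1)` edges. Every other edge of `G` meets `N(v)` (an edge at `v` ends in `N(v)`),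
and as `N(v)` is independent in a triangle-free graph, each such edge meets it exactly once.
Hence there are `∑_{u ∈ N(v)} deg u = deg v + ∑_{u ∈ N(v)} (deg u - 1)` of them.
-/

open Finset

namespace SimpleGraph

variable {V : Type*}

theorem indepSetFree_iff_not_exists {G : SimpleGraph V} {n : ℕ} : G.IndepSetFree n ↔
    ¬ ∃ s : Finset V, #s = n ∧ ∀ a ∈ s, ∀ b ∈ s, a ≠ b → ¬ G.Adj a b := by
  simp [IndepSetFree, isNIndepSet_iff, isIndepSet_iff, Set.Pairwise, and_comm]

theorem IndepSetFree.induce_of_forall_not_adj {G : SimpleGraph V} {n : ℕ}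
    (h : G.IndepSetFree (n + 1)) {v : V} {s : Set V} (hs : ∀ w ∈ s, w ≠ v ∧ ¬ G.Adj v w) :
    (G.induce s).IndepSetFree n := by
  classical
  intro t ht
  have hmem {w : V} (hw : w ∈ (t.map (Function.Embedding.subtype _) : Set V)) :
      ∃ x ∈ t, (x : V) = w := by
    simpa only [coe_map, Function.Embedding.coe_subtype, Set.mem_image, mem_coe] using hw
  refine h (insert v (t.map (Function.Embedding.subtype _))) ⟨?_, ?_⟩
  · rw [coe_insert]
    refine Set.Pairwise.insert (fun a ha b hb hab => ?_) fun w hw _ => ?_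
    · obtain ⟨x, hx, rfl⟩ := hmem ha
      obtain ⟨y, hy, rfl⟩ := hmem hb
      exact ht.isIndepSet hx hy (Subtype.coe_ne_coe.mp hab)
    · obtain ⟨w, -, rfl⟩ := hmem hw
      exact ⟨(hs w w.2).2, fun hadj => (hs w w.2).2 hadj.symm⟩
  · rw [card_insert_of_notMem, card_map, ht.card_eq]
    simp only [mem_map, Function.Embedding.coe_subtype, not_exists, not_and]
    exact fun w _ hw => (hs w (hw ▸ w.2)).1 hw

variable [Fintype V] (G : SimpleGraph V) [DecidableRel G.Adj]

theorem sum_degree_neighborFinset (v : V) :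
    ∑ u ∈ G.neighborFinset v, G.degree u =
      G.degree v + ∑ u ∈ G.neighborFinset v, (G.degree u - 1) := by
  have hpos : ∀ u ∈ G.neighborFinset v, 1 ≤ G.degree u := fun u hu =>
    (G.degree_pos_iff_exists_adj u).mpr ⟨v, ((G.mem_neighborFinset v u).mp hu).symm⟩
  rw [← card_neighborFinset_eq_degree, card_eq_sum_ones, ← sum_add_distrib]
  exact sum_congr rfl fun u hu => by have := hpos u hu; omega

variable [DecidableEq V]

theorem card_compl_insert_neighborFinset (v : V) :
    #(insert v (G.neighborFinset v))ᶜ = Fintype.card V - G.degree v - 1 := by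
  rw [card_compl, card_insert_of_notMem (G.notMem_neighborFinset_self v),
    card_neighborFinset_eq_degree]
  omega

theorem card_edgeFinset_induce_add_card_filter_not_subset (s : Finset V) :
    #(G.induce ↑s).edgeFinset + #{e ∈ G.edgeFinset | ¬ e.toFinset ⊆ s} = #G.edgeFinset := by
  rw [← card_filter_edgeFinset_toFinset_subset, card_filter_add_card_filter_not]

theorem card_biUnion_incidenceFinset {s : Finset V} (hs : G.IsIndepSet s) :
    #(s.biUnion (G.incidenceFinset ·)) = ∑ u ∈ s, G.degree u := by
  rw [card_biUnion]
  · simp_rw [card_incidenceFinset_eq_degree]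
  · intro u hu w hw huw
    refine Finset.disjoint_left.mpr fun e heu hew => ?_
    rw [mem_incidenceFinset] at heu hew
    exact hs hu hw huw (G.adj_of_mem_incidenceSet huw heu hew)

theorem filter_edgeFinset_not_subset_compl_insert_neighborFinset (v : V) :
    {e ∈ G.edgeFinset | ¬ e.toFinset ⊆ (insert v (G.neighborFinset v))ᶜ} =
      (G.neighborFinset v).biUnion (G.incidenceFinset ·) := by
  ext e
  induction e with
  | _ a b =>
  simp only [mem_filter, mem_edgeFinset, mem_edgeSet, Sym2.toFinset_mk_eq, mem_biUnion,
    mem_neighborFinset, mem_incidenceFinset, incidenceSet, Set.mem_ofPred_eq, Sym2.mem_iff,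
    insert_subset_iff, singleton_subset_iff, mem_compl, mem_insert]
  grind [adj_comm, Adj.ne]

theorem card_edgeFinset_induce_compl_insert_neighborFinset_add_sum_degree
    (h : G.CliqueFree 3) (v : V) :
    #(G.induce ↑(insert v (G.neighborFinset v))ᶜ).edgeFinset +
      ∑ u ∈ G.neighborFinset v, G.degree u = #G.edgeFinset := by
  have hindep : G.IsIndepSet (G.neighborFinset v : Set V) := by
    simpa using isIndepSet_neighborSet_of_triangleFree G h v
  rw [← card_biUnion_incidenceFinset G hindep,
    ← filter_edgeFinset_not_subset_compl_insert_neighborFinset,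
    card_edgeFinset_induce_add_card_filter_not_subset]

end SimpleGraph

open SimpleGraph

/-- Suppose G is triangle-free on n vertices with no independent set of order k,
and f(m) is a lower bound on the number of edges of every triangle-free graph on
m vertices with no independent set of order k-1.  Then for every vertex v,
e ≥ f(n - deg(v) - 1) + deg(v) + Σ_{u ∈ N(v)} (deg(u) - 1); in particular
e ≥ f(n - deg(v) - 1) + deg(v). -/
theorem stmt_13 {V : Type} [Fintype V] [DecidableEq V] (G : SimpleGraph V)
    [DecidableRel G.Adj] (k : ℕ) (f : ℕ → ℕ)
    (htf : G.CliqueFree 3)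
    (hind : ¬ ∃ s : Finset V, s.card = k ∧
      ∀ a ∈ s, ∀ b ∈ s, a ≠ b → ¬ G.Adj a b)
    (hf : ∀ (W : Type) [Fintype W] [DecidableEq W] (H : SimpleGraph W)
      [DecidableRel H.Adj], H.CliqueFree 3 →
      (¬ ∃ s : Finset W, s.card = k - 1 ∧
        ∀ a ∈ s, ∀ b ∈ s, a ≠ b → ¬ H.Adj a b) →
      f (Fintype.card W) ≤ H.edgeFinset.card) :
    ∀ v : V,
      f (Fintype.card V - G.degree v - 1) + G.degree v +
          ∑ u ∈ G.neighborFinset v, (G.degree u - 1) ≤ G.edgeFinset.card ∧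
      f (Fintype.card V - G.degree v - 1) + G.degree v ≤ G.edgeFinset.card := by
  intro v
  obtain ⟨j, rfl⟩ : ∃ j, k = j + 1 :=
    Nat.exists_eq_succ_of_ne_zero fun hk => hind ⟨∅, hk ▸ rfl, by simp⟩
  have hsplit := G.card_edgeFinset_induce_compl_insert_neighborFinset_add_sum_degree htf v
  rw [sum_degree_neighborFinset] at hsplit
  set s : Finset V := (insert v (G.neighborFinset v))ᶜ
  have hfree : (G.induce (s : Set V)).IndepSetFree j :=
    (indepSetFree_iff_not_exists.mpr hind).induce_of_forall_not_adj (v := v)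
      (by simp +contextual [s])
  have hrest : f (Fintype.card V - G.degree v - 1) ≤ #(G.induce (s : Set V)).edgeFinset := by
    rw [← card_compl_insert_neighborFinset, ← Fintype.card_coe s]
    exact hf _ _ (htf.comap (Embedding.induce _).isContained) (indepSetFree_iff_not_exists.mp hfree)
  omega
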